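/- Let q = 2^r be an even prime power and n ≥ 1. Let N denote the number of pairs (x,y) ∈ F_{q^n} × F_{q^n} satisfying x·(y^q + y) = x² + 1, and for each nonzero α ∈ F_q let N_α denote the number of pairs (x,y) ∈ F_{q^n} × F_{q^n} satisfying x·(y² + y) = α·(x² + 1). Then N − q^n + 1 = ∑_{α ∈ F_q, α ≠ 0} (N_α − q^n + 1). (This is the affine form of the statement that the curve x(y^q+y)=x²+1 over F_q is the fiber product of the curves C_α : x(y²+y)=α(x²+1), each projective curve having exactly two points at infinity, so that #C(F_{q^n}) − (q^n+1) = ∑_{α∈F_q^×} (#C_α(F_{q^n}) − (q^n+1)).) -/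

import Mathlib

/-!
Write `℘ y = y² + y` and `φ y = y^q + y`, and let `B = ℘(K)`, `A = φ(K)`. In characteristic two
`℘` has kernel `{0, 1}`, so `B` has index 2, and `y^(2^r) + y` telescopes into a sum of values of `℘`,
so `A ⊆ B`. As `A` is an `F_q`-subspace of codimension one, it is the largest `F_q`-subspace inside
`B`. Hence for `c ∉ A` the `α ∈ F_q` with `α c ∈ B` form a subgroup of index 2, while for `c ∈ A`
all of them do. For `x ≠ 0` and `c = (x² + 1)/x`, the fibres over `x` have `q·[c ∈ A]` and
`2·[α c ∈ B]` points, so summing over `α ∈ F_q^×` gives `∑_α N_α = N + (q - 2)(q^n - 1)`.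
-/

open Finset Polynomial

theorem Fintype.sum_eq_add_sum_units {M₀ M : Type*} [GroupWithZero M₀] [Fintype M₀]
    [Fintype M₀ˣ] [AddCommMonoid M] (f : M₀ → M) : ∑ a, f a = f 0 + ∑ u : M₀ˣ, f u := by
  classical
  rw [← Fintype.sum_equiv (unitsEquivNeZero.optionCongr.trans (Equiv.optionSubtypeNe 0)) _ f
    fun _ => rfl, Fintype.sum_option]
  rfl

namespace AddMonoidHom

variable {G H : Type*} [AddGroup G] [AddGroup H] (f : G →+ H) {c : H}

theorem natCard_fiber_of_mem_range (hc : c ∈ f.range) :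
    Nat.card {y // f y = c} = Nat.card f.ker := by
  obtain ⟨a, rfl⟩ := hc
  exact Nat.card_congr (f.fiberEquivKer a)

theorem natCard_fiber_of_notMem_range (hc : c ∉ f.range) : Nat.card {y // f y = c} = 0 :=
  have : IsEmpty {y // f y = c} := ⟨fun y => hc ⟨y, y.2⟩⟩
  Nat.card_of_isEmpty

end AddMonoidHom

namespace AddSubgroup

section Ring

variable (F : Type*) {V : Type*} [Ring F] [AddCommGroup V] [Module F V]

def submoduleCore (B : AddSubgroup V) : Submodule F V where
  carrier := {v | ∀ a : F, a • v ∈ B}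
  add_mem' hv hw a := by simpa only [smul_add] using B.add_mem (hv a) (hw a)
  zero_mem' a := by simpa only [smul_zero] using B.zero_mem
  smul_mem' b v hv a := by simpa only [smul_smul] using hv (a * b)

variable {F} {B : AddSubgroup V}

theorem submoduleCore_le : (B.submoduleCore F).toAddSubgroup ≤ B := fun v hv => by
  simpa only [one_smul] using hv 1

theorem le_submoduleCore {W : Submodule F V} (h : W.toAddSubgroup ≤ B) :
    W ≤ B.submoduleCore F :=
  fun _ hv a => h (W.smul_mem a hv)

theorem submoduleCore_ne_top (hB : B ≠ ⊤) : B.submoduleCore F ≠ ⊤ := fun htop =>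
  hB (top_le_iff.mp fun _ _ => submoduleCore_le (htop ▸ Submodule.mem_top))

theorem two_mul_natCard_smul_mem [Finite F] (hB : B.index = 2) {c : V}
    (hc : c ∉ B.submoduleCore F) : 2 * Nat.card {a : F // a • c ∈ B} = Nat.card F := by
  set S := B.comap ((smulAddHom F V).flip c)
  have hdvd : S.index ∣ 2 := by
    rw [← hB, index_comap]
    exact relIndex_dvd_index_of_normal _ _
  have hne : S.index ≠ 1 := fun h => hc fun a => (index_eq_one.mp h ▸ mem_top a : a ∈ S)
  have hS : S.index = 2 := ((Nat.dvd_prime Nat.prime_two).mp hdvd).resolve_left hne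
  rw [← card_mul_index S, hS, mul_comm]
  rfl

end Ring

theorem sum_units_ite_smul_mem {F V : Type*} [DivisionRing F] [Fintype F] [Fintype Fˣ]
    [AddCommGroup V] [Module F V] {B : AddSubgroup V} [DecidablePred (· ∈ B)]
    [DecidablePred (· ∈ B.submoduleCore F)] (hB : B.index = 2) (c : V) :
    ∑ a : Fˣ, (if (a : F) • c ∈ B then 2 else 0 : ℤ) =
      Fintype.card F - 2 + if c ∈ B.submoduleCore F then (Fintype.card F : ℤ) else 0 := by
  have hsum := Fintype.sum_eq_add_sum_units fun a : F => if a • c ∈ B then (2 : ℤ) else 0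
  rw [zero_smul, if_pos B.zero_mem, Finset.sum_ite, sum_const_zero, add_zero, sum_const,
    ← Fintype.card_subtype, ← Nat.card_eq_fintype_card, nsmul_eq_mul] at hsum
  split_ifs with hc
  · have : Nat.card {a : F // a • c ∈ B} = Fintype.card F := by
      rw [Nat.card_eq_fintype_card, Fintype.card_subtype, filter_true_of_mem fun a _ => hc a,
        card_univ]
    rw [this] at hsum
    linarith
  · have := two_mul_natCard_smul_mem hB hc
    rw [Nat.card_eq_fintype_card (α := F)] at this
    have : (2 * Nat.card {a : F // a • c ∈ B} : ℤ) = Fintype.card F := by exact_mod_cast this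
    linarith

end AddSubgroup

section CharTwo

variable (K : Type*) [CommRing K] [CharP K 2]

def artinSchreier : K →+ K := (frobenius K 2).toAddMonoidHom + AddMonoidHom.id K

variable {K}

theorem artinSchreier_apply (y : K) : artinSchreier K y = y ^ 2 + y := rfl

theorem pow_two_pow_add_self_mem_range_artinSchreier (y : K) (r : ℕ) :
    y ^ 2 ^ r + y ∈ (artinSchreier K).range := by
  induction r with
  | zero => simp [CharTwo.add_self_eq_zero]
  | succ r ih =>
    have h : y ^ 2 ^ (r + 1) + y = artinSchreier K (y ^ 2 ^ r) + (y ^ 2 ^ r + y) := by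
      rw [artinSchreier_apply, pow_succ, pow_mul]
      linear_combination -(y ^ 2 ^ r) * CharTwo.two_eq_zero (R := K)
    exact h ▸ add_mem ⟨_, rfl⟩ ih

variable [IsDomain K]

theorem natCard_ker_artinSchreier : Nat.card (artinSchreier K).ker = 2 := by
  classical
  have hker : ∀ y, y ∈ (artinSchreier K).ker ↔ y ∈ ({0, 1} : Finset K) := fun y => by
    rw [AddMonoidHom.mem_ker, artinSchreier_apply, Finset.mem_insert, Finset.mem_singleton,
      show y ^ 2 + y = y * (y + 1) by ring, mul_eq_zero, CharTwo.add_eq_zero]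
  rw [Nat.card_congr (Equiv.subtypeEquivRight hker), Nat.card_eq_finsetCard,
    Finset.card_pair zero_ne_one]

theorem index_range_artinSchreier [Finite K] : (artinSchreier K).range.index = 2 := by
  rw [AddSubgroup.index_range, natCard_ker_artinSchreier]

theorem natCard_artinSchreier_fiber [DecidablePred (· ∈ (artinSchreier K).range)] (c : K) :
    Nat.card {y : K // y ^ 2 + y = c} = if c ∈ (artinSchreier K).range then 2 else 0 := by
  split_ifs with hc
  · exact ((artinSchreier K).natCard_fiber_of_mem_range hc).trans natCard_ker_artinSchreier
  · exact (artinSchreier K).natCard_fiber_of_notMem_range hc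

end CharTwo

section FrobeniusAddId

variable (F K : Type*) [Field F] [Fintype F] [Field K] [Algebra F K]

def frobeniusAddId : K →ₗ[F] K := (FiniteField.frobeniusAlgHom F K).toLinearMap + LinearMap.id

variable {F K}

theorem frobeniusAddId_apply (y : K) : frobeniusAddId F K y = y ^ Fintype.card F + y := rfl

theorem natCard_ker_frobeniusAddId_le :
    Nat.card (LinearMap.ker (frobeniusAddId F K)) ≤ Fintype.card F := by
  set P : F[X] := X ^ Fintype.card F + X
  have hdeg : P.natDegree = Fintype.card F := by
    rw [natDegree_add_eq_left_of_natDegree_lt] <;>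
      simp [Fintype.one_lt_card]
  have hP : P ≠ 0 := ne_zero_of_natDegree_gt (hdeg ▸ Fintype.card_pos)
  have hsub : (LinearMap.ker (frobeniusAddId F K) : Set K) ⊆ P.rootSet K := fun y hy => by
    rw [mem_rootSet_of_ne hP]
    simpa [P, frobeniusAddId_apply] using hy
  calc Nat.card (LinearMap.ker (frobeniusAddId F K))
      = (LinearMap.ker (frobeniusAddId F K) : Set K).ncard := (Nat.card_coe_set_eq _).symm
    _ ≤ (P.rootSet K).ncard := Set.ncard_le_ncard hsub (P.rootSet_finite K)
    _ ≤ Fintype.card F := hdeg ▸ ncard_rootSet_le P K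

variable [Finite K] [CharP K 2]

theorem natCard_ker_frobeniusAddId :
    Nat.card (LinearMap.ker (frobeniusAddId F K)) = Fintype.card F := by
  refine natCard_ker_frobeniusAddId_le.antisymm ?_
  rw [← Nat.card_eq_fintype_card]
  refine Nat.card_le_card_of_injective (fun a => ⟨algebraMap F K a, ?_⟩)
    fun a b h => (algebraMap F K).injective (congrArg Subtype.val h)
  rw [LinearMap.mem_ker, frobeniusAddId_apply, ← map_pow, FiniteField.pow_card,
    CharTwo.add_self_eq_zero]

theorem finrank_range_frobeniusAddId :
    Module.finrank F (LinearMap.range (frobeniusAddId F K)) + 1 = Module.finrank F K := by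
  have hker : Module.finrank F (LinearMap.ker (frobeniusAddId F K)) = 1 := by
    apply Nat.pow_right_injective (Fintype.one_lt_card (α := F))
    have := Module.natCard_eq_pow_finrank (K := F) (V := LinearMap.ker (frobeniusAddId F K))
    rw [natCard_ker_frobeniusAddId, Nat.card_eq_fintype_card] at this
    simpa using this.symm
  rw [← hker, LinearMap.finrank_range_add_finrank_ker]

theorem range_frobeniusAddId_eq_submoduleCore {r : ℕ} (hq : Fintype.card F = 2 ^ r) :
    LinearMap.range (frobeniusAddId F K) = (artinSchreier K).range.submoduleCore F := by
  have hle : LinearMap.range (frobeniusAddId F K) ≤ (artinSchreier K).range.submoduleCore F := by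
    apply AddSubgroup.le_submoduleCore
    rintro _ ⟨y, rfl⟩
    rw [frobeniusAddId_apply, hq]
    exact pow_two_pow_add_self_mem_range_artinSchreier y r
  have hlt : Module.finrank F ((artinSchreier K).range.submoduleCore F) < Module.finrank F K :=
    Submodule.finrank_lt <| AddSubgroup.submoduleCore_ne_top fun h => by
      simpa [h] using index_range_artinSchreier (K := K)
  have hrange := finrank_range_frobeniusAddId (F := F) (K := K)
  exact Submodule.eq_of_le_of_finrank_le hle (by omega)

theorem natCard_frobeniusAddId_fiber {r : ℕ} (hq : Fintype.card F = 2 ^ r)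
    [DecidablePred (· ∈ (artinSchreier K).range.submoduleCore F)] (c : K) :
    Nat.card {y : K // y ^ Fintype.card F + y = c} =
      if c ∈ (artinSchreier K).range.submoduleCore F then Fintype.card F else 0 := by
  split_ifs with hc <;> rw [← range_frobeniusAddId_eq_submoduleCore hq] at hc
  · exact ((frobeniusAddId F K).toAddMonoidHom.natCard_fiber_of_mem_range hc).trans
      natCard_ker_frobeniusAddId
  · exact (frobeniusAddId F K).toAddMonoidHom.natCard_fiber_of_notMem_range hc

end FrobeniusAddId

theorem natCard_mul_eq_eq_sum_units {K : Type*} [Field K] [Fintype K] [Fintype Kˣ]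
    (f g : K → K) (hg : g 0 ≠ 0) :
    Nat.card {p : K × K // p.1 * f p.2 = g p.1} = ∑ x : Kˣ, Nat.card {y // f y = g x / x} := by
  rw [Nat.card_congr (Equiv.subtypeProdEquivSigmaSubtype fun x y => x * f y = g x),
    Nat.card_sigma, Fintype.sum_eq_add_sum_units]
  have : IsEmpty {y // 0 * f y = g 0} := ⟨fun y => hg (by simpa using y.2.symm)⟩
  rw [Nat.card_of_isEmpty, zero_add]
  refine Fintype.sum_congr _ _ fun x => Nat.card_congr (Equiv.subtypeEquivRight fun y => ?_)
  rw [eq_div_iff x.ne_zero, mul_comm]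

theorem stmt5_general (r q n : ℕ) (hq : q = 2 ^ r)
    (Fq K : Type) [Field Fq] [Fintype Fq] [DecidableEq Fq] [Field K] [Fintype K] [Algebra Fq K]
    (hFq : Fintype.card Fq = q) (hK : Module.finrank Fq K = n) :
    (Nat.card {xy : K × K // xy.1 * (xy.2 ^ q + xy.2) = xy.1 ^ 2 + 1} : ℤ)
        - (q : ℤ) ^ n + 1 =
    ∑ α : Fqˣ, ((Nat.card {xy : K × K // xy.1 * (xy.2 ^ 2 + xy.2) =
        algebraMap Fq K (α : Fq) * (xy.1 ^ 2 + 1)} : ℤ) - (q : ℤ) ^ n + 1) := by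
  classical
  subst hFq
  have : CharP Fq 2 := charP_of_card_eq_prime_pow hq
  have : CharP K 2 := charP_of_injective_algebraMap (algebraMap Fq K).injective 2
  set B := (artinSchreier K).range
  have hN : (Nat.card {xy : K × K // xy.1 * (xy.2 ^ Fintype.card Fq + xy.2) = xy.1 ^ 2 + 1} : ℤ) =
      ∑ x : Kˣ, if ((x ^ 2 + 1) / x : K) ∈ B.submoduleCore Fq then (Fintype.card Fq : ℤ) else 0 := by
    rw [natCard_mul_eq_eq_sum_units (fun y => y ^ Fintype.card Fq + y) (fun x => x ^ 2 + 1)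
      (by simp)]
    simp only [natCard_frobeniusAddId_fiber hq]
    push_cast
    rfl
  have hNα : ∀ α : Fqˣ, (Nat.card {xy : K × K // xy.1 * (xy.2 ^ 2 + xy.2) =
        algebraMap Fq K (α : Fq) * (xy.1 ^ 2 + 1)} : ℤ) =
      ∑ x : Kˣ, if (α : Fq) • ((x ^ 2 + 1) / x : K) ∈ B then 2 else 0 := fun α => by
    rw [natCard_mul_eq_eq_sum_units (fun y => y ^ 2 + y)
      (fun x => algebraMap Fq K α * (x ^ 2 + 1)) (by simp)]
    simp only [natCard_artinSchreier_fiber, Algebra.smul_def, mul_div_assoc]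
    push_cast
    rfl
  have hsum := fun c : K =>
    AddSubgroup.sum_units_ite_smul_mem (F := Fq) (B := B) index_range_artinSchreier c
  have hKu : (Fintype.card Kˣ : ℤ) = Fintype.card Fq ^ n - 1 := by
    rw [Fintype.card_units, Nat.cast_sub Fintype.card_pos, Module.card_eq_pow_finrank (K := Fq),
      hK, Nat.cast_pow, Nat.cast_one]
  have hFu : (Fintype.card Fqˣ : ℤ) = Fintype.card Fq - 1 := by
    rw [Fintype.card_units, Nat.cast_sub Fintype.card_pos, Nat.cast_one]
  simp only [hN, hNα, sum_add_distrib, sum_sub_distrib]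
  rw [sum_comm]
  simp only [hsum, sum_add_distrib, sum_const, card_univ, nsmul_eq_mul, hKu, hFu]
  ring

/-- Let `q = 2 ^ r` be an even prime power, `n ≥ 1`, `Fq` a field with
`q` elements and `K` an extension of `Fq` of degree `n`.  With `N` the number of pairs
`(x, y) ∈ K × K` with `x·(y^q + y) = x² + 1` and, for nonzero `α ∈ Fq`, `N_α` the number
of pairs with `x·(y² + y) = α·(x² + 1)`, we have
`N − q^n + 1 = ∑_{α ∈ Fq, α ≠ 0} (N_α − q^n + 1)`. -/
theorem stmt5 (r q n : ℕ) (hr : 1 ≤ r) (hq : q = 2 ^ r) (hn : 1 ≤ n)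
    (Fq K : Type) [Field Fq] [Fintype Fq] [DecidableEq Fq] [Field K] [Fintype K] [Algebra Fq K]
    (hFq : Fintype.card Fq = q) (hK : Module.finrank Fq K = n) :
    (Nat.card {xy : K × K // xy.1 * (xy.2 ^ q + xy.2) = xy.1 ^ 2 + 1} : ℤ)
        - (q : ℤ) ^ n + 1 =
    ∑ α : Fqˣ, ((Nat.card {xy : K × K // xy.1 * (xy.2 ^ 2 + xy.2) =
        algebraMap Fq K (α : Fq) * (xy.1 ^ 2 + 1)} : ℤ) - (q : ℤ) ^ n + 1) :=
  stmt5_general r q n hq Fq K hFq hK
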